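/- Let (i_1, …, i_t) be any valid firing sequence in the Modified Kostant Game with active set I, and set J = S \ {s_i : i ∈ I}. Then the word s_{i_t} s_{i_{t-1}} ⋯ s_{i_1} is a reduced expression, and the element w = s_{i_t} ⋯ s_{i_1} belongs to W^J. -/

import Mathlib

open scoped Classical RealInnerProductSpace

noncomputable section

variable {n d : ℕ}

/-- The pairing `⟨β, γ^∨⟩ = 2(β,γ)/(γ,γ)` of a vector with a coroot. -/
def rsPair (β γ : EuclideanSpace ℝ (Fin d)) : ℝ := 2 * ⟪β, γ⟫ / ⟪γ, γ⟫

/-- The coroot `γ^∨ = 2γ/(γ,γ)`. -/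
def rsCoroot (γ : EuclideanSpace ℝ (Fin d)) : EuclideanSpace ℝ (Fin d) :=
  (2 / ⟪γ, γ⟫) • γ

/-- `⟨·, γ^∨⟩` as a linear functional. -/
def corootForm (γ : EuclideanSpace ℝ (Fin d)) : EuclideanSpace ℝ (Fin d) →ₗ[ℝ] ℝ where
  toFun x := 2 * ⟪x, γ⟫ / ⟪γ, γ⟫
  map_add' x y := by simp only [inner_add_left]; ring
  map_smul' c x := by simp only [real_inner_smul_left, RingHom.id_apply, smul_eq_mul]; ring

/-- A finite reduced crystallographic root system in the Euclidean space `ℝ^d`, together with a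
chosen base of simple roots `α 0, …, α (n-1)`: every root is an integral linear combination of
the simple roots with all coefficients nonnegative or all nonpositive. -/
structure RootSystemBase (n d : ℕ) : Type where
  Φ : Finset (EuclideanSpace ℝ (Fin d))
  α : Fin n → EuclideanSpace ℝ (Fin d)
  α_mem : ∀ i, α i ∈ Φ
  nonzero : ∀ β ∈ Φ, β ≠ 0
  reduced : ∀ β ∈ Φ, ∀ t : ℝ, t • β ∈ Φ → t = 1 ∨ t = -1
  crystallographic : ∀ β ∈ Φ, ∀ γ ∈ Φ, ∃ k : ℤ, rsPair β γ = (k : ℝ)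
  reflClosed : ∀ β ∈ Φ, ∀ γ ∈ Φ, β - rsPair β γ • γ ∈ Φ
  indep : LinearIndependent ℝ α
  base : ∀ β ∈ Φ, ∃ c : Fin n → ℤ,
    β = ∑ i, (c i : ℝ) • α i ∧ ((∀ i, 0 ≤ c i) ∨ (∀ i, c i ≤ 0))

/-- The extended space `E' = E ⊕ ℝ^I`. -/
abbrev ExtSp (n d : ℕ) (I : Finset (Fin n)) : Type :=
  EuclideanSpace ℝ (Fin d) × ({p : Fin n // p ∈ I} → ℝ)

/-- The total source vector `β = ∑_{p ∈ I} β_p` in the extended space. -/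
def betaVec (n d : ℕ) (I : Finset (Fin n)) : ExtSp n d I := (0, fun _ => 1)

namespace RootSystemBase

variable (R : RootSystemBase n d)

lemma alpha_ne_zero (i : Fin n) : R.α i ≠ 0 := R.nonzero _ (R.α_mem i)

lemma inner_alpha_ne_zero (i : Fin n) : ⟪R.α i, R.α i⟫ ≠ 0 := fun h =>
  R.alpha_ne_zero i ((inner_self_eq_zero (𝕜 := ℝ)).mp h)

lemma corootForm_alpha_self (i : Fin n) : corootForm (R.α i) (R.α i) = 2 := by
  have h2 := R.inner_alpha_ne_zero i
  show 2 * ⟪R.α i, R.α i⟫ / ⟪R.α i, R.α i⟫ = 2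
  rw [mul_div_assoc, div_self h2, mul_one]

/-- The simple reflection `s_i : x ↦ x - ⟨x, α_i^∨⟩ α_i` as a linear automorphism of `E`. -/
def sRefl (i : Fin n) :
    EuclideanSpace ℝ (Fin d) ≃ₗ[ℝ] EuclideanSpace ℝ (Fin d) :=
  Module.reflection (R.corootForm_alpha_self i)

/-- The Weyl group `W`, as the subgroup of linear automorphisms of `E` generated by the
simple reflections. -/
def weyl : Subgroup (EuclideanSpace ℝ (Fin d) ≃ₗ[ℝ] EuclideanSpace ℝ (Fin d)) :=
  Subgroup.closure (Set.range R.sRefl)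

/-- `wordProd [i₁, …, i_t] = s_{i₁} ⋯ s_{i_t}`. -/
def wordProd (l : List (Fin n)) :
    EuclideanSpace ℝ (Fin d) ≃ₗ[ℝ] EuclideanSpace ℝ (Fin d) :=
  (l.map R.sRefl).prod

/-- The Weyl group element `s_{i_t} ⋯ s_{i_1}` associated to the firing sequence
`(i_1, …, i_t)`. -/
def seqProd (l : List (Fin n)) :
    EuclideanSpace ℝ (Fin d) ≃ₗ[ℝ] EuclideanSpace ℝ (Fin d) :=
  (l.reverse.map R.sRefl).prod

/-- The length function `ℓ` of the Coxeter system `(W, S)`: the minimal number of simple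
reflections needed to express `w`. -/
def len (w : EuclideanSpace ℝ (Fin d) ≃ₗ[ℝ] EuclideanSpace ℝ (Fin d)) : ℕ :=
  sInf {t | ∃ l : List (Fin n), l.length = t ∧ R.wordProd l = w}

/-- The set `W^J` of minimal length representatives of `W/W_J`, for `J = S \ {s_i : i ∈ I}`:
those `w ∈ W` with `ℓ(w s_j) > ℓ(w)` for all `j ∉ I`. -/
def minReps (I : Finset (Fin n)) :
    Set (EuclideanSpace ℝ (Fin d) ≃ₗ[ℝ] EuclideanSpace ℝ (Fin d)) :=
  {w | w ∈ R.weyl ∧ ∀ j, j ∉ I → R.len w < R.len (w * R.sRefl j)}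

/-- The Cartan matrix `a_{uv} = ⟨α_u, α_v^∨⟩` (an integer by crystallinity). -/
def cartan (u v : Fin n) : ℤ := ⌊rsPair (R.α u) (R.α v)⌋

/-- The set `Φ⁺` of positive roots. -/
def posRoots : Finset (EuclideanSpace ℝ (Fin d)) :=
  R.Φ.filter fun β => ∃ c : Fin n → ℤ, β = ∑ i, (c i : ℝ) • R.α i ∧ ∀ i, 0 ≤ c i

/-- The set `Φ_P⁺` of positive roots lying in the span of the simple roots `α_j`, `j ∈ P`. -/
def parPos (P : Finset (Fin n)) : Finset (EuclideanSpace ℝ (Fin d)) :=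
  R.posRoots.filter fun β => β ∈ Submodule.span ℝ (R.α '' (P : Set (Fin n)))

/-- `∑_{u ≠ v} (−a_{uv}) c_u + [v ∈ I]`. -/
def chipBound (I : Finset (Fin n)) (c : Fin n → ℤ) (v : Fin n) : ℤ :=
  (∑ u ∈ Finset.univ.erase v, -(R.cartan u v) * c u) + (if v ∈ I then 1 else 0)

/-- Vertex `v` is sad in the configuration `c` (Modified Kostant Game with active set `I`). -/
def Sad (I : Finset (Fin n)) (c : Fin n → ℤ) (v : Fin n) : Prop :=
  2 * c v < R.chipBound I c v

/-- Firing vertex `v`. -/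
def fire (I : Finset (Fin n)) (c : Fin n → ℤ) (v : Fin n) : Fin n → ℤ :=
  Function.update c v (R.chipBound I c v - c v)

end RootSystemBase

/-- `ValidFrom R I c l`: starting from the configuration `c`, the sequence `l` fires a sad
vertex at each step. -/
def RootSystemBase.ValidFrom (R : RootSystemBase n d) (I : Finset (Fin n)) :
    (Fin n → ℤ) → List (Fin n) → Prop
  | _, [] => True
  | c, v :: l => R.Sad I c v ∧ RootSystemBase.ValidFrom R I (R.fire I c v) l

namespace RootSystemBase

variable (R : RootSystemBase n d)

/-- A valid firing sequence: starts at the zero configuration and fires a sad vertex at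
each step. -/
def Valid (I : Finset (Fin n)) (l : List (Fin n)) : Prop := R.ValidFrom I 0 l

/-- The configuration reached after playing the sequence `l` from the zero configuration. -/
def play (I : Finset (Fin n)) (l : List (Fin n)) : Fin n → ℤ :=
  l.foldl (R.fire I) 0

/-- A maximal valid firing sequence: no vertex is sad in the final configuration. -/
def MaximalSeq (I : Finset (Fin n)) (l : List (Fin n)) : Prop :=
  R.Valid I l ∧ ∀ v, ¬ R.Sad I (R.play I l) v

/-- The (integer) coefficients of a vector in the basis of simple coroots, when they exist. -/
def corootCoeffs (x : EuclideanSpace ℝ (Fin d)) : Fin n → ℤ :=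
  if h : ∃ k : Fin n → ℤ, x = ∑ j, (k j : ℝ) • rsCoroot (R.α j) then h.choose else 0

/-- The `I`-height of a (co)vector: the sum over `j ∈ I` of its coefficients in the basis
of simple coroots. -/
def htI (I : Finset (Fin n)) (x : EuclideanSpace ℝ (Fin d)) : ℤ :=
  ∑ j ∈ I, R.corootCoeffs x j

end RootSystemBase

/-- The extended pairing `⟨·, α_i^∨⟩` on `E' = E ⊕ ℝ^I`, determined by
`⟨β_p, α_i^∨⟩ = −δ_{pi}`, as a linear functional. -/
def extForm (R : RootSystemBase n d) (I : Finset (Fin n)) (i : Fin n) :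
    ExtSp n d I →ₗ[ℝ] ℝ :=
  (corootForm (R.α i)).comp (LinearMap.fst ℝ _ _) -
    (if h : i ∈ I then
      (LinearMap.proj (R := ℝ) (φ := fun _ : {p : Fin n // p ∈ I} => ℝ) ⟨i, h⟩).comp
        (LinearMap.snd ℝ _ _)
    else 0)

namespace RootSystemBase

variable (R : RootSystemBase n d)

lemma extForm_apply (I : Finset (Fin n)) (i : Fin n) (x : ExtSp n d I) :
    extForm R I i x = corootForm (R.α i) x.1 - (if h : i ∈ I then x.2 ⟨i, h⟩ else 0) := by
  by_cases h : i ∈ I <;> simp [extForm, h]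

lemma extForm_alpha (I : Finset (Fin n)) (i : Fin n) :
    extForm R I i ((R.α i, 0) : ExtSp n d I) = 2 := by
  rw [R.extForm_apply]
  simp [R.corootForm_alpha_self i]

/-- The simple reflection `s_i : x ↦ x − ⟨x, α_i^∨⟩ α_i` on the extended space `E'`. -/
def extRefl (I : Finset (Fin n)) (i : Fin n) : ExtSp n d I ≃ₗ[ℝ] ExtSp n d I :=
  Module.reflection (R.extForm_alpha I i)

/-- The extended pairing `⟨x, α_i^∨⟩` for `x ∈ E'`. -/
def extPair (I : Finset (Fin n)) (x : ExtSp n d I) (i : Fin n) : ℝ := extForm R I i x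

/-- The action of `s_{i_t} ⋯ s_{i_1}` on the extended space `E'`. -/
def extSeqProd (I : Finset (Fin n)) (l : List (Fin n)) : ExtSp n d I ≃ₗ[ℝ] ExtSp n d I :=
  (l.reverse.map (R.extRefl I)).prod

end RootSystemBase

/-! To a configuration `c` attach the linear form `q_c(z) = (γ_c, z) + L(z)` (`gameForm I c`),
where `γ_c = ∑ c_u α_u` and `L(α_u) = -[u ∈ I] (α_u, α_u) / 2`. Then `v` is sad in `c` iff
`q_c(α_v) < 0`, and firing `v` turns `q_c` into `q_c ∘ s_v`. By induction on the sequence,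
`q_c` is negative on every positive root inverted by the element `w` of a valid sequence played
from `c`. If the sequence starts by firing `v`, so that `w = w' s_v`, the form after that firing
takes the value `-q_c(α_v) > 0` at `α_v`; hence `w' α_v > 0` and `w` has one inversion more than
`w'`. So `w` has `t` inversions, hence length `t`. For `j ∉ I`, `q_0(α_j) = 0`, so `w α_j > 0`
and `w s_j` has `t + 1` inversions. -/

theorem LinearIndependent.exists_dual_apply_eq {ι K V : Type*} [Field K] [AddCommGroup V]
    [Module K V] {v : ι → V} (hv : LinearIndependent K v) (g : ι → K) :
    ∃ f : Module.Dual K V, ∀ u, f (v u) = g u := by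
  obtain ⟨f, hf⟩ := LinearMap.exists_extend ((Finsupp.linearCombination K g).comp hv.repr)
  refine ⟨f, fun u => ?_⟩
  have hu : v u ∈ Submodule.span K (Set.range v) := Submodule.subset_span ⟨u, rfl⟩
  have := LinearMap.congr_fun hf ⟨v u, hu⟩
  rwa [LinearMap.comp_apply, LinearMap.comp_apply, hv.repr_eq_single u _ rfl,
    Finsupp.linearCombination_single, one_smul] at this

theorem rsPair_self {β : EuclideanSpace ℝ (Fin d)} (hβ : β ≠ 0) : rsPair β β = 2 := by
  rw [rsPair, mul_div_assoc, div_self (inner_self_ne_zero.2 hβ), mul_one]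

namespace RootSystemBase

variable (R : RootSystemBase n d) {β : EuclideanSpace ℝ (Fin d)}

section Roots

lemma inner_alpha_pos (i : Fin n) : 0 < ⟪R.α i, R.α i⟫ :=
  real_inner_self_pos.2 (R.alpha_ne_zero i)

lemma sRefl_apply (i : Fin n) (x : EuclideanSpace ℝ (Fin d)) :
    R.sRefl i x = x - rsPair x (R.α i) • R.α i := by
  rw [sRefl, Module.reflection_apply]
  rfl

lemma sRefl_alpha (i : Fin n) : R.sRefl i (R.α i) = -R.α i :=
  Module.reflection_apply_self _

lemma sRefl_sRefl (i : Fin n) (x : EuclideanSpace ℝ (Fin d)) : R.sRefl i (R.sRefl i x) = x :=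
  Module.involutive_reflection _ x

lemma sRefl_mem (hβ : β ∈ R.Φ) (i : Fin n) : R.sRefl i β ∈ R.Φ := by
  rw [sRefl_apply]
  exact R.reflClosed _ hβ _ (R.α_mem i)

lemma neg_mem (hβ : β ∈ R.Φ) : -β ∈ R.Φ := by
  have := R.reflClosed β hβ β hβ
  rwa [rsPair_self (R.nonzero _ hβ), two_smul, sub_add_eq_sub_sub, sub_sub_cancel_left] at this

lemma inner_alpha_eq_cartan_mul (u v : Fin n) :
    ⟪R.α u, R.α v⟫ = R.cartan u v * (⟪R.α v, R.α v⟫ / 2) := by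
  obtain ⟨k, hk⟩ := R.crystallographic _ (R.α_mem u) _ (R.α_mem v)
  rw [cartan, hk, Int.floor_intCast, ← hk, rsPair]
  field_simp
  rw [mul_div_cancel_right₀ _ (R.inner_alpha_pos v).ne']

lemma cartan_self (v : Fin n) : R.cartan v v = 2 := by
  rw [cartan, rsPair_self (R.alpha_ne_zero v)]
  norm_num

/-- Coordinate along `α j`; off the span of the simple roots it depends on a choice. -/
def coord (j : Fin n) : Module.Dual ℝ (EuclideanSpace ℝ (Fin d)) :=
  (R.indep.exists_dual_apply_eq fun u => if u = j then 1 else 0).choose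

lemma coord_alpha (j u : Fin n) : R.coord j (R.α u) = if u = j then 1 else 0 :=
  (R.indep.exists_dual_apply_eq fun u => if u = j then 1 else 0).choose_spec u

lemma coord_sum (c : Fin n → ℝ) (j : Fin n) : R.coord j (∑ u, c u • R.α u) = c j := by
  simp [coord_alpha]

lemma eq_sum_coord (hβ : β ∈ R.Φ) : β = ∑ u, R.coord u β • R.α u := by
  obtain ⟨c, rfl, -⟩ := R.base β hβ
  simp only [coord_sum]

lemma coord_sRefl {u v : Fin n} (huv : u ≠ v) (x : EuclideanSpace ℝ (Fin d)) :
    R.coord u (R.sRefl v x) = R.coord u x := by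
  simp [sRefl_apply, coord_alpha, Ne.symm huv]

lemma mem_posRoots_iff : β ∈ R.posRoots ↔ β ∈ R.Φ ∧ ∀ j, 0 ≤ R.coord j β := by
  refine ⟨fun h => ?_, fun ⟨hβ, hpos⟩ => ?_⟩
  · obtain ⟨hβ, c, rfl, hc⟩ := Finset.mem_filter.1 h
    exact ⟨hβ, fun j => by rw [coord_sum]; exact_mod_cast hc j⟩
  · refine Finset.mem_filter.2 ⟨hβ, ?_⟩
    obtain ⟨c, rfl, hc | hc⟩ := R.base _ hβ
    · exact ⟨c, rfl, hc⟩
    · refine ⟨c, rfl, fun j => ?_⟩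
      have := hpos j
      rw [coord_sum] at this
      exact_mod_cast this

lemma alpha_mem_posRoots (i : Fin n) : R.α i ∈ R.posRoots :=
  R.mem_posRoots_iff.2 ⟨R.α_mem i, fun j => by rw [coord_alpha]; split_ifs <;> norm_num⟩

lemma mem_posRoots_or_neg_mem_posRoots (hβ : β ∈ R.Φ) :
    β ∈ R.posRoots ∨ -β ∈ R.posRoots := by
  obtain ⟨c, rfl, hc | hc⟩ := R.base _ hβ
  · exact Or.inl (R.mem_posRoots_iff.2 ⟨hβ, fun j => by rw [coord_sum]; exact_mod_cast hc j⟩)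
  · exact Or.inr (R.mem_posRoots_iff.2 ⟨R.neg_mem hβ, fun j => by
      rw [map_neg, coord_sum, neg_nonneg]; exact_mod_cast hc j⟩)

lemma neg_notMem_posRoots (h : β ∈ R.posRoots) : -β ∉ R.posRoots := by
  intro hneg
  obtain ⟨hβ, hpos⟩ := R.mem_posRoots_iff.1 h
  have hzero : ∀ u, R.coord u β = 0 := fun u =>
    le_antisymm (by simpa using (R.mem_posRoots_iff.1 hneg).2 u) (hpos u)
  apply R.nonzero β hβ
  rw [R.eq_sum_coord hβ]
  simp [hzero]

lemma sRefl_mem_posRoots (h : β ∈ R.posRoots) {v : Fin n} (hne : β ≠ R.α v) :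
    R.sRefl v β ∈ R.posRoots := by
  obtain ⟨hβ, hpos⟩ := R.mem_posRoots_iff.1 h
  -- by reducedness, `β` is not a multiple of `α_v`
  obtain ⟨u, huv, hu⟩ : ∃ u, u ≠ v ∧ R.coord u β ≠ 0 := by
    by_contra! hcoord
    have hβv : β = R.coord v β • R.α v := by
      rw [R.eq_sum_coord hβ, Finset.sum_eq_single v (fun u _ huv => by simp [hcoord u huv])
        (by simp)]
      simp [coord_alpha]
    rcases R.reduced _ (R.α_mem v) _ (hβv ▸ hβ) with h1 | h1
    · exact hne (by rw [hβv, h1, one_smul])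
    · linarith [hpos v]
  rcases R.mem_posRoots_or_neg_mem_posRoots (R.sRefl_mem hβ v) with hs | hs
  · exact hs
  · have := (R.mem_posRoots_iff.1 hs).2 u
    rw [map_neg, R.coord_sRefl huv] at this
    exact absurd (le_antisymm (by linarith) (hpos u)) hu

end Roots

section Inversions

variable {w : EuclideanSpace ℝ (Fin d) ≃ₗ[ℝ] EuclideanSpace ℝ (Fin d)} {v : Fin n}

def invSet (w : EuclideanSpace ℝ (Fin d) ≃ₗ[ℝ] EuclideanSpace ℝ (Fin d)) :
    Finset (EuclideanSpace ℝ (Fin d)) :=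
  R.posRoots.filter fun β => w β ∉ R.posRoots

def invCount (w : EuclideanSpace ℝ (Fin d) ≃ₗ[ℝ] EuclideanSpace ℝ (Fin d)) : ℕ :=
  (R.invSet w).card

variable {R} in
lemma mem_invSet : β ∈ R.invSet w ↔ β ∈ R.posRoots ∧ w β ∉ R.posRoots :=
  Finset.mem_filter

lemma invCount_one : R.invCount 1 = 0 := by
  rw [invCount, Finset.card_eq_zero, invSet, Finset.filter_eq_empty_iff]
  exact fun β hβ h => h hβ

lemma sRefl_mem_invSet (hβ : β ∈ R.invSet (w * R.sRefl v)) (hβv : β ≠ R.α v) :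
    R.sRefl v β ∈ R.invSet w :=
  mem_invSet.2 ⟨R.sRefl_mem_posRoots (mem_invSet.1 hβ).1 hβv, (mem_invSet.1 hβ).2⟩

lemma invSet_mul_sRefl (hv : w (R.α v) ∈ R.posRoots) :
    R.invSet (w * R.sRefl v) =
      insert (R.α v) ((R.invSet w).map (R.sRefl v).toEquiv.toEmbedding) := by
  ext β
  rw [Finset.mem_insert, Finset.mem_map_equiv]
  change _ ↔ _ ∨ R.sRefl v β ∈ _
  by_cases hβv : β = R.α v
  · subst hβv
    simpa [mem_invSet, R.alpha_mem_posRoots, R.sRefl_alpha] using R.neg_notMem_posRoots hv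
  refine ⟨fun hβ => Or.inr (R.sRefl_mem_invSet hβ hβv), ?_⟩
  rintro (h | hsβ)
  · exact absurd h hβv
  obtain ⟨hsβ, hwβ⟩ := mem_invSet.1 hsβ
  refine mem_invSet.2 ⟨?_, hwβ⟩
  have hsβv : R.sRefl v β ≠ R.α v := fun h => hwβ (h ▸ hv)
  simpa [R.sRefl_sRefl] using R.sRefl_mem_posRoots hsβ hsβv

lemma invCount_mul_sRefl (hv : w (R.α v) ∈ R.posRoots) :
    R.invCount (w * R.sRefl v) = R.invCount w + 1 := by
  have hαv : R.α v ∉ (R.invSet w).map (R.sRefl v).toEquiv.toEmbedding := by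
    rw [Finset.mem_map_equiv]
    change R.sRefl v (R.α v) ∉ _
    rw [R.sRefl_alpha, mem_invSet, not_and]
    exact fun h => absurd h (R.neg_notMem_posRoots (R.alpha_mem_posRoots v))
  rw [invCount, R.invSet_mul_sRefl hv, Finset.card_insert_of_notMem hαv, Finset.card_map,
    invCount]

lemma invSet_sRefl_mul_subset :
    R.invSet (R.sRefl v * w) ⊆ insert (w.symm (R.α v)) (R.invSet w) := by
  intro β hβ
  obtain ⟨hβp, hβn⟩ := mem_invSet.1 hβ
  rw [Finset.mem_insert, mem_invSet, w.eq_symm_apply]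
  by_contra! h
  exact hβn (R.sRefl_mem_posRoots (h.2 hβp) h.1)

lemma invCount_sRefl_mul_le :
    R.invCount (R.sRefl v * w) ≤ R.invCount w + 1 :=
  (Finset.card_le_card R.invSet_sRefl_mul_subset).trans (Finset.card_insert_le _ _)

lemma invCount_wordProd_le (l : List (Fin n)) : R.invCount (R.wordProd l) ≤ l.length := by
  induction l with
  | nil => simp [wordProd, invCount_one]
  | cons v l ih =>
    rw [wordProd, List.map_cons, List.prod_cons, List.length_cons]
    exact R.invCount_sRefl_mul_le.trans (Nat.add_le_add_right ih 1)

-- Stated for `wordProd l`: an element that is no word has the junk length `sInf ∅ = 0`.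
lemma invCount_le_len (l : List (Fin n)) : R.invCount (R.wordProd l) ≤ R.len (R.wordProd l) := by
  obtain ⟨l₀, hlen, hw⟩ := Nat.sInf_mem (s := {t | ∃ l' : List (Fin n), l'.length = t ∧
    R.wordProd l' = R.wordProd l}) ⟨l.length, l, rfl, rfl⟩
  rw [len, ← hlen, ← hw]
  exact R.invCount_wordProd_le l₀

lemma len_wordProd_le (l : List (Fin n)) : R.len (R.wordProd l) ≤ l.length :=
  Nat.sInf_le ⟨l, rfl, rfl⟩

lemma wordProd_mem_weyl (l : List (Fin n)) : R.wordProd l ∈ R.weyl :=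
  Subgroup.list_prod_mem _ fun _ hx => by
    obtain ⟨i, -, rfl⟩ := List.mem_map.1 hx
    exact Subgroup.subset_closure ⟨i, rfl⟩

lemma seqProd_cons (v : Fin n) (l : List (Fin n)) :
    R.seqProd (v :: l) = R.seqProd l * R.sRefl v := by
  simp [seqProd]

lemma seqProd_eq_wordProd_reverse (l : List (Fin n)) : R.seqProd l = R.wordProd l.reverse := rfl

end Inversions

section Game

variable {I : Finset (Fin n)} {c : Fin n → ℤ} {l : List (Fin n)}

def gamma (c : Fin n → ℤ) : EuclideanSpace ℝ (Fin d) := ∑ u, (c u : ℝ) • R.α u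

/-- Accounts for the extra chip `[v ∈ I]` of the modified game. -/
def correction (I : Finset (Fin n)) : Module.Dual ℝ (EuclideanSpace ℝ (Fin d)) :=
  (R.indep.exists_dual_apply_eq fun u => if u ∈ I then -(⟪R.α u, R.α u⟫ / 2) else 0).choose

lemma correction_alpha (I : Finset (Fin n)) (u : Fin n) :
    R.correction I (R.α u) = if u ∈ I then -(⟪R.α u, R.α u⟫ / 2) else 0 :=
  (R.indep.exists_dual_apply_eq fun u =>
    if u ∈ I then -(⟪R.α u, R.α u⟫ / 2) else 0).choose_spec u

def gameForm (I : Finset (Fin n)) (c : Fin n → ℤ) :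
    Module.Dual ℝ (EuclideanSpace ℝ (Fin d)) :=
  innerₛₗ ℝ (R.gamma c) + R.correction I

lemma two_mul_sub_chipBound (I : Finset (Fin n)) (c : Fin n → ℤ) (v : Fin n) :
    2 * c v - R.chipBound I c v = ∑ u, R.cartan u v * c u - if v ∈ I then 1 else 0 := by
  rw [chipBound, ← Finset.add_sum_erase _ _ (Finset.mem_univ v), R.cartan_self]
  simp only [neg_mul, Finset.sum_neg_distrib]
  ring

lemma gameForm_alpha (I : Finset (Fin n)) (c : Fin n → ℤ) (v : Fin n) :
    R.gameForm I c (R.α v) = ⟪R.α v, R.α v⟫ / 2 * (2 * c v - R.chipBound I c v : ℤ) := by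
  have hsum : ∑ u, (c u : ℝ) * ⟪R.α u, R.α v⟫
      = ⟪R.α v, R.α v⟫ / 2 * ∑ u, (R.cartan u v * c u : ℝ) := by
    rw [Finset.mul_sum]
    exact Finset.sum_congr rfl fun u _ => by rw [R.inner_alpha_eq_cartan_mul]; ring
  simp only [gameForm, LinearMap.add_apply, innerₛₗ_apply_apply, gamma, sum_inner,
    real_inner_smul_left, hsum, correction_alpha, two_mul_sub_chipBound]
  push_cast
  split_ifs <;> ring

lemma sad_iff_gameForm_alpha_neg (I : Finset (Fin n)) (c : Fin n → ℤ) (v : Fin n) :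
    R.Sad I c v ↔ R.gameForm I c (R.α v) < 0 := by
  rw [gameForm_alpha, ← smul_eq_mul, smul_neg_iff_of_pos_left (half_pos (R.inner_alpha_pos v)),
    Int.cast_lt_zero, Sad, sub_neg]

lemma gamma_fire (I : Finset (Fin n)) (c : Fin n → ℤ) (v : Fin n) :
    R.gamma (R.fire I c v) =
      R.gamma c - ((2 * c v - R.chipBound I c v : ℤ) : ℝ) • R.α v := by
  have hfire : R.fire I c v = c - Pi.single v (2 * c v - R.chipBound I c v) := by
    ext u
    by_cases h : u = v
    · subst h; simp [fire]; ring
    · simp [fire, h]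
  simp [gamma, hfire, sub_smul, Finset.sum_sub_distrib, Pi.single_apply]

lemma gameForm_fire (I : Finset (Fin n)) (c : Fin n → ℤ) (v : Fin n)
    (z : EuclideanSpace ℝ (Fin d)) :
    R.gameForm I (R.fire I c v) z = R.gameForm I c (R.sRefl v z) := by
  have hA := (R.inner_alpha_pos v).ne'
  rw [R.sRefl_apply, map_sub, map_smul, R.gameForm_alpha I c v, rsPair, smul_eq_mul]
  simp only [gameForm, LinearMap.add_apply, innerₛₗ_apply_apply, gamma_fire, real_inner_comm z,
    inner_sub_right, real_inner_smul_right]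
  field_simp
  ring

lemma gameForm_neg_of_mem_invSet (hl : R.ValidFrom I c l) (hβ : β ∈ R.invSet (R.seqProd l)) :
    R.gameForm I c β < 0 := by
  induction l generalizing c β with
  | nil => exact absurd (mem_invSet.1 hβ).1 (mem_invSet.1 hβ).2
  | cons v l ih =>
    obtain ⟨hsad, hl⟩ := hl
    rw [seqProd_cons] at hβ
    by_cases hβv : β = R.α v
    · exact hβv ▸ (R.sad_iff_gameForm_alpha_neg I c v).1 hsad
    · simpa [gameForm_fire, sRefl_sRefl] using ih hl (R.sRefl_mem_invSet hβ hβv)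

lemma seqProd_alpha_mem_posRoots (hl : R.ValidFrom I c l) {v : Fin n}
    (hv : 0 ≤ R.gameForm I c (R.α v)) : R.seqProd l (R.α v) ∈ R.posRoots := by
  by_contra h
  exact (R.gameForm_neg_of_mem_invSet hl (mem_invSet.2 ⟨R.alpha_mem_posRoots v, h⟩)).not_ge hv

lemma invCount_seqProd (hl : R.ValidFrom I c l) : R.invCount (R.seqProd l) = l.length := by
  induction l generalizing c with
  | nil => exact R.invCount_one
  | cons v l ih =>
    obtain ⟨hsad, hl⟩ := hl
    have hv : 0 ≤ R.gameForm I (R.fire I c v) (R.α v) := by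
      rw [gameForm_fire, sRefl_alpha, map_neg, neg_nonneg]
      exact ((R.sad_iff_gameForm_alpha_neg I c v).1 hsad).le
    rw [seqProd_cons, R.invCount_mul_sRefl (R.seqProd_alpha_mem_posRoots hl hv), ih hl,
      List.length_cons]

lemma len_seqProd (hl : R.Valid I l) : R.len (R.seqProd l) = l.length := by
  rw [seqProd_eq_wordProd_reverse]
  refine le_antisymm ?_ ?_
  · simpa using R.len_wordProd_le l.reverse
  · simpa [← seqProd_eq_wordProd_reverse, R.invCount_seqProd hl]
      using R.invCount_le_len l.reverse

lemma seqProd_mem_minReps (hl : R.Valid I l) : R.seqProd l ∈ R.minReps I := by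
  refine ⟨R.wordProd_mem_weyl l.reverse, fun j hj => ?_⟩
  have hj0 : R.gameForm I 0 (R.α j) = 0 := by simp [gameForm_alpha, chipBound, hj]
  have hinv := R.invCount_mul_sRefl (R.seqProd_alpha_mem_posRoots hl hj0.ge)
  have hword : R.seqProd l * R.sRefl j = R.wordProd (l.reverse ++ [j]) := by
    simp [seqProd, wordProd]
  have hle := R.invCount_le_len (l.reverse ++ [j])
  rw [← hword, hinv, R.invCount_seqProd hl] at hle
  rw [R.len_seqProd hl]
  omega

end Game

end RootSystemBase

/-- Any valid firing sequence `(i_1, …, i_t)` of the Modified Kostant Game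
with active set `I` yields a reduced expression `s_{i_t} ⋯ s_{i_1}`, and the resulting element
belongs to `W^J` for `J = S \\ {s_i : i ∈ I}`. -/
theorem statement0 {n d : ℕ} (R : RootSystemBase n d) (I : Finset (Fin n))
    (l : List (Fin n)) (hl : R.Valid I l) :
    R.len (R.seqProd l) = l.length ∧ R.seqProd l ∈ R.minReps I :=
  ⟨R.len_seqProd hl, R.seqProd_mem_minReps hl⟩
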